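/- Small-frequency asymptotics of the spectral density of fractional Brownian motion increments: let H ∈ (0,1), C_H = Γ(2H+1) sin(πH)/π and f_H(λ) = C_H (1 − cos λ) Σ_{k∈ℤ} |2πk + λ|^{−1−2H} for λ ∈ (-π,π)∖{0}. Then for every integer k ≥ 0, lim_{λ→0} ∂_H^k f_H(λ) / ( 2^{k−1} C_H |λ|^{1−2H} (log(1/|λ|))^k ) = 1; in particular f_H(λ) ~ (C_H/2)|λ|^{1−2H} and ∂_H f_H(λ) ~ C_H |λ|^{1−2H} log(1/|λ|) as λ → 0. -/

import Mathlib

open MeasureTheory Real Filter Topology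

noncomputable section

/-- `C_H = Γ(2H+1) sin(πH)/π`. -/
def CH (H : ℝ) : ℝ := Real.Gamma (2 * H + 1) * Real.sin (π * H) / π

/-- The spectral density of the increments of fractional Brownian motion with Hurst
parameter `H`: `f_H(λ) = C_H (1 - cos λ) Σ_{k∈ℤ} |2πk + λ|^{-1-2H}`. -/
def fBmSpec (H : ℝ) (l : ℝ) : ℝ :=
  CH H * (1 - Real.cos l) * ∑' k : ℤ, |2 * π * (k : ℝ) + l| ^ (-1 - 2 * H)

/-!
Write `f_H(λ) = C_H (1 - cos λ) S_H(λ)` with `S_H(λ) = Σ_k |2πk + λ|^{-1-2H}`. Differentiating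
termwise, `∂_H^m S_H(λ) = Σ_k (-2 log |2πk + λ|)^m |2πk + λ|^{-1-2H}`: the `k = 0` term is
`(2 log (1/|λ|))^m |λ|^{-1-2H}`, while the others stay bounded as `λ → 0`, because
`|2πk + λ| ≥ |k|` and `(log a)^m` is dominated by any positive power of `a`. By Leibniz's rule,
`∂_H^k f_H = (1 - cos λ) Σ_j (k choose j) C_H^{(j)} ∂_H^{k-j} S_H`; after division by
`2^{k-1} C_H |λ|^{1-2H} log (1/|λ|)^k` only the term `j = 0` survives, since `1 - cos λ ~ λ²/2`
and the `j`-th term carries an extra factor `(2 log (1/|λ|))^{-j}`.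
-/

open Set

theorem Real.contDiffAt_Gamma {x : ℝ} (hx : 0 < x) {n : WithTop ℕ∞} :
    ContDiffAt ℝ n Real.Gamma x := by
  have hopen : IsOpen {z : ℂ | 0 < z.re} := isOpen_lt continuous_const Complex.continuous_re
  have hdiff : DifferentiableOn ℂ Complex.Gamma {z : ℂ | 0 < z.re} := fun z hz =>
    (Complex.differentiableAt_Gamma z fun m hm => by
      have hre : 0 < z.re := hz
      rw [hm, Complex.neg_re, Complex.natCast_re] at hre
      linarith [(m.cast_nonneg : (0 : ℝ) ≤ m)]).differentiableWithinAt
  have := ((hdiff.contDiffOn (n := n) hopen).contDiffAt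
    (hopen.mem_nhds (by simpa using hx))).real_of_complex
  simpa only [Complex.Gamma_ofReal, Complex.ofReal_re] using this

theorem contDiffAt_CH {H : ℝ} (hH : 0 < H) {n : WithTop ℕ∞} : ContDiffAt ℝ n CH H := by
  unfold CH
  have hGamma : ContDiffAt ℝ n (fun y : ℝ => Real.Gamma (2 * y + 1)) H :=
    (Real.contDiffAt_Gamma (by linarith)).comp H (by fun_prop)
  exact (hGamma.mul (Real.contDiff_sin.contDiffAt.comp H (by fun_prop))).div_const π

theorem CH_pos {H : ℝ} (hH : H ∈ Ioo (0 : ℝ) 1) : 0 < CH H := by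
  have hsin : 0 < Real.sin (π * H) :=
    Real.sin_pos_of_pos_of_lt_pi (by nlinarith [pi_pos, hH.1]) (by nlinarith [pi_pos, hH.2])
  have := Real.Gamma_pos_of_pos (by linarith [hH.1] : 0 < 2 * H + 1)
  unfold CH
  positivity

section DerivativeTower

variable {𝕜 F : Type*} [NontriviallyNormedField 𝕜] [NormedAddCommGroup F] [NormedSpace 𝕜 F]
  {f : ℕ → 𝕜 → F} {s : Set 𝕜}

theorem iteratedDeriv_eqOn_of_hasDerivAt_succ (hs : IsOpen s)
    (hf : ∀ m, ∀ x ∈ s, HasDerivAt (f m) (f (m + 1) x) x) (m : ℕ) :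
    EqOn (iteratedDeriv m (f 0)) (f m) s := by
  induction m with
  | zero => exact fun x _ => rfl
  | succ m ih =>
    intro x hx
    rw [iteratedDeriv_succ, (ih.eventuallyEq_of_mem (hs.mem_nhds hx)).deriv_eq]
    exact (hf m x hx).deriv

theorem contDiffOn_of_hasDerivAt_succ (hs : IsOpen s)
    (hf : ∀ m, ∀ x ∈ s, HasDerivAt (f m) (f (m + 1) x) x) (n : ℕ∞) :
    ContDiffOn 𝕜 n (f 0) s :=
  contDiffOn_of_differentiableOn_deriv fun m _ =>
    DifferentiableOn.congr (f := f m)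
      (fun x hx => (hf m x hx).differentiableAt.differentiableWithinAt) fun _ hx =>
        (iteratedDerivWithin_of_isOpen hs hx).trans
          (iteratedDeriv_eqOn_of_hasDerivAt_succ hs hf m hx)

end DerivativeTower

theorem hasDerivAt_neg_two_mul_log_pow_mul_rpow {a : ℝ} (ha : 0 < a) (m : ℕ) (y : ℝ) :
    HasDerivAt (fun y => (-2 * Real.log a) ^ m * a ^ (-1 - 2 * y))
      ((-2 * Real.log a) ^ (m + 1) * a ^ (-1 - 2 * y)) y := by
  have hlin : HasDerivAt (fun y : ℝ => -1 - 2 * y) (-2) y := by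
    simpa using ((hasDerivAt_id y).const_mul 2).const_sub (-1)
  exact ((hlin.const_rpow ha).const_mul _).congr_deriv (by ring)

theorem abs_neg_two_mul_log_pow_mul_rpow_le {a b y : ℝ} (ha : 1 ≤ a) (hb : 0 < b) (hy : b ≤ y)
    (m : ℕ) :
    |(-2 * Real.log a) ^ m * a ^ (-1 - 2 * y)| ≤ (2 * (m + 1) / b) ^ m * a ^ (-1 - b) := by
  set ε := b / (m + 1)
  have hε : 0 < ε := by positivity
  have hmε : m * ε ≤ b := by
    rw [mul_div_assoc', div_le_iff₀ (by positivity)]; nlinarith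
  have hlog : 0 ≤ Real.log a := Real.log_nonneg ha
  -- `log a ≤ a ^ ε / ε` absorbs the logarithmic factor into a small power of `a`
  have hpow : (2 * Real.log a) ^ m ≤ (2 * (m + 1) / b) ^ m * a ^ (m * ε) := by
    have hlog_le : 2 * Real.log a ≤ 2 / ε * a ^ ε := by
      have := Real.log_le_rpow_div (by linarith : 0 ≤ a) hε
      rw [div_mul_eq_mul_div, mul_div_assoc]
      linarith
    calc (2 * Real.log a) ^ m ≤ (2 / ε * a ^ ε) ^ m := pow_le_pow_left₀ (by positivity) hlog_le m
      _ = (2 * (m + 1) / b) ^ m * a ^ (m * ε) := by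
          rw [mul_pow, ← Real.rpow_natCast (a ^ ε), ← Real.rpow_mul (by linarith), mul_comm ε]
          simp only [ε]
          field_simp
  calc |(-2 * Real.log a) ^ m * a ^ (-1 - 2 * y)|
      = (2 * Real.log a) ^ m * a ^ (-1 - 2 * y) := by
        rw [abs_mul, abs_pow, abs_of_pos (Real.rpow_pos_of_pos (by linarith) _)]
        congr 2; rw [abs_mul, abs_of_nonneg hlog]; norm_num
    _ ≤ (2 * (m + 1) / b) ^ m * a ^ (m * ε) * a ^ (-1 - 2 * y) := by gcongr
    _ = (2 * (m + 1) / b) ^ m * a ^ (m * ε - 1 - 2 * y) := by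
        rw [mul_assoc, ← Real.rpow_add (by linarith)]; ring_nf
    _ ≤ (2 * (m + 1) / b) ^ m * a ^ (-1 - b) := by
        gcongr _ * ?_
        exact Real.rpow_le_rpow_of_exponent_le ha (by linarith)

theorem tendsto_log_one_div_abs_nhdsNE_zero :
    Tendsto (fun l : ℝ => Real.log (1 / |l|)) (𝓝[≠] 0) atTop := by
  refine (tendsto_neg_atBot_atTop.comp Real.tendsto_log_nhdsNE_zero).congr fun l => ?_
  simp [Real.log_inv]

theorem eventually_ne_zero_and_abs_lt_one : ∀ᶠ l : ℝ in 𝓝[≠] 0, l ≠ 0 ∧ |l| < 1 := by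
  have hball : ∀ᶠ l : ℝ in 𝓝 0, |l| < 1 :=
    (continuous_abs.tendsto' 0 0 abs_zero).eventually (gt_mem_nhds one_pos)
  exact eventually_mem_nhdsWithin.and (nhdsWithin_le_nhds hball)

theorem tendsto_two_mul_one_sub_cos_div_sq :
    Tendsto (fun l : ℝ => 2 * (1 - Real.cos l) / l ^ 2) (𝓝[≠] 0) (𝓝 1) := by
  -- `1 - cos l = 2 sin² (l / 2)`, so the quotient is `sinc² (l / 2)`
  have hsinc : Tendsto (fun l : ℝ => Real.sinc (l / 2) ^ 2) (𝓝[≠] 0) (𝓝 1) := by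
    have hcont : Continuous fun l : ℝ => Real.sinc (l / 2) ^ 2 :=
      (Real.continuous_sinc.comp (continuous_id.div_const 2)).pow 2
    simpa using (hcont.tendsto 0).mono_left nhdsWithin_le_nhds
  refine hsinc.congr' (eventually_mem_nhdsWithin.mono fun l (hl : l ≠ 0) => ?_)
  have hcos : Real.cos l = 1 - 2 * Real.sin (l / 2) ^ 2 := by
    rw [← Real.cos_two_mul_eq_one_sub, mul_div_cancel₀ l two_ne_zero]
  rw [Real.sinc_of_ne_zero (by simpa using hl)]
  simp only [hcos]
  field_simp
  ring

theorem tendsto_abs_rpow_nhdsNE_zero {s : ℝ} (hs : 0 < s) :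
    Tendsto (fun l : ℝ => |l| ^ s) (𝓝[≠] 0) (𝓝 0) := by
  have h := ((Real.continuousAt_rpow_const 0 s (Or.inr hs.le)).tendsto.comp
    (continuous_abs.tendsto' 0 0 abs_zero)).mono_left (nhdsWithin_le_nhds (s := {0}ᶜ))
  simpa [Function.comp_def, Real.zero_rpow hs.ne'] using h

theorem summable_abs_intCast_rpow {b : ℝ} (hb : 0 < b) :
    Summable fun k : ℤ => |(k : ℝ)| ^ (-1 - b) := by
  convert Real.summable_abs_int_rpow (by linarith : 1 < 1 + b) using 3
  ring

namespace fBmSpec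

/-- The `m`-th derivative in `y` of `|2πk + l| ^ (-1 - 2y)`. -/
def latticeTerm (m : ℕ) (l y : ℝ) (k : ℤ) : ℝ :=
  (-2 * Real.log |2 * π * k + l|) ^ m * |2 * π * k + l| ^ (-1 - 2 * y)

def latticeSum (m : ℕ) (l y : ℝ) : ℝ := ∑' k : ℤ, latticeTerm m l y k

def latticeTail (m : ℕ) (l y : ℝ) : ℝ := ∑' k : ℤ, if k = 0 then 0 else latticeTerm m l y k

theorem abs_intCast_le_abs_two_pi_mul_add {l : ℝ} (hl : |l| ≤ 1) {k : ℤ} (hk : k ≠ 0) :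
    |(k : ℝ)| ≤ |2 * π * k + l| := by
  have hk1 : (1 : ℝ) ≤ |(k : ℝ)| := by exact_mod_cast Int.one_le_abs hk
  have : 2 * π * |(k : ℝ)| - |l| ≤ |2 * π * k + l| := by
    simpa [abs_mul, abs_of_pos pi_pos] using abs_sub_abs_le_abs_add (2 * π * (k : ℝ)) l
  nlinarith [pi_gt_three]

theorem abs_latticeTail_term_le {l b y : ℝ} (hl : |l| ≤ 1) (hb : 0 < b) (hy : b ≤ y) (m : ℕ)
    (k : ℤ) :
    |if k = 0 then 0 else latticeTerm m l y k| ≤ (2 * (m + 1) / b) ^ m * |(k : ℝ)| ^ (-1 - b) := by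
  split_ifs with hk
  · simp [hk, Real.zero_rpow (by linarith : -1 - b ≠ 0)]
  have hka := abs_intCast_le_abs_two_pi_mul_add hl hk
  have hk1 : (1 : ℝ) ≤ |(k : ℝ)| := by exact_mod_cast Int.one_le_abs hk
  calc |latticeTerm m l y k| ≤ (2 * (m + 1) / b) ^ m * |2 * π * k + l| ^ (-1 - b) :=
        abs_neg_two_mul_log_pow_mul_rpow_le (hk1.trans hka) hb hy m
    _ ≤ (2 * (m + 1) / b) ^ m * |(k : ℝ)| ^ (-1 - b) := by
        gcongr _ * ?_
        exact Real.rpow_le_rpow_of_nonpos (by linarith) hka (by linarith)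

theorem summable_latticeTail_term {l y : ℝ} (hl : |l| ≤ 1) (hy : 0 < y) (m : ℕ) :
    Summable fun k : ℤ => if k = 0 then 0 else latticeTerm m l y k :=
  .of_norm_bounded ((summable_abs_intCast_rpow hy).mul_left _)
    (abs_latticeTail_term_le hl hy le_rfl m)

theorem abs_latticeTail_le {l y : ℝ} (hl : |l| ≤ 1) (hy : 0 < y) (m : ℕ) :
    |latticeTail m l y| ≤ (2 * (m + 1) / y) ^ m * ∑' k : ℤ, |(k : ℝ)| ^ (-1 - y) := by
  rw [← tsum_mul_left]
  exact (norm_tsum_le_tsum_norm (summable_latticeTail_term hl hy m).norm).trans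
    ((summable_latticeTail_term hl hy m).norm.tsum_le_tsum (abs_latticeTail_term_le hl hy le_rfl m)
      ((summable_abs_intCast_rpow hy).mul_left _))

theorem hasDerivAt_latticeTail {l y : ℝ} (hl : |l| ≤ 1) (hy : 0 < y) (m : ℕ) :
    HasDerivAt (latticeTail m l) (latticeTail (m + 1) l y) y := by
  have hderiv : ∀ (k : ℤ), ∀ x ∈ Ioi (y / 2),
      HasDerivAt (fun x => if k = 0 then 0 else latticeTerm m l x k)
        (if k = 0 then 0 else latticeTerm (m + 1) l x k) x := by
    intro k x _
    split_ifs with hk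
    · exact hasDerivAt_const x 0
    · have hpos : 0 < |2 * π * k + l| :=
        (abs_pos.2 (Int.cast_ne_zero.2 hk)).trans_le (abs_intCast_le_abs_two_pi_mul_add hl hk)
      exact hasDerivAt_neg_two_mul_log_pow_mul_rpow hpos m x
  have hy₂ : y ∈ Ioi (y / 2) := half_lt_self hy
  exact hasDerivAt_tsum_of_isPreconnected ((summable_abs_intCast_rpow (half_pos hy)).mul_left _)
    isOpen_Ioi isPreconnected_Ioi hderiv
    (fun k x hx => abs_latticeTail_term_le hl (half_pos hy) hx.le (m + 1) k) hy₂
    (summable_latticeTail_term hl hy m) hy₂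

theorem latticeSum_eq_add_latticeTail {l y : ℝ} (hl : |l| ≤ 1) (hy : 0 < y) (m : ℕ) :
    latticeSum m l y = (-2 * Real.log |l|) ^ m * |l| ^ (-1 - 2 * y) + latticeTail m l y := by
  have hsum : Summable (Function.update (latticeTerm m l y) 0 0) :=
    (summable_latticeTail_term hl hy m).congr fun k => by
      by_cases hk : k = 0 <;> simp [hk]
  rw [latticeSum, hsum.tsum_eq_add_tsum_ite' 0, latticeTerm, latticeTail]
  simp

theorem hasDerivAt_latticeSum {l y : ℝ} (hl₀ : l ≠ 0) (hl : |l| ≤ 1) (hy : 0 < y) (m : ℕ) :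
    HasDerivAt (latticeSum m l) (latticeSum (m + 1) l y) y := by
  have hsplit : ∀ x ∈ Ioi (0 : ℝ), latticeSum m l x =
      (-2 * Real.log |l|) ^ m * |l| ^ (-1 - 2 * x) + latticeTail m l x :=
    fun x hx => latticeSum_eq_add_latticeTail hl hx m
  rw [latticeSum_eq_add_latticeTail hl hy]
  exact ((hasDerivAt_neg_two_mul_log_pow_mul_rpow (abs_pos.2 hl₀) m y).add
    (hasDerivAt_latticeTail hl hy m)).congr_of_eventuallyEq
      (Filter.eventually_of_mem (isOpen_Ioi.mem_nhds hy) hsplit)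

theorem iteratedDeriv_latticeSum {l y : ℝ} (hl₀ : l ≠ 0) (hl : |l| ≤ 1) (hy : 0 < y) (m : ℕ) :
    iteratedDeriv m (latticeSum 0 l) y = latticeSum m l y :=
  iteratedDeriv_eqOn_of_hasDerivAt_succ isOpen_Ioi
    (fun m _ hx => hasDerivAt_latticeSum hl₀ hl hx m) m hy

theorem contDiffAt_latticeSum {l y : ℝ} (hl₀ : l ≠ 0) (hl : |l| ≤ 1) (hy : 0 < y) (n : ℕ) :
    ContDiffAt ℝ n (latticeSum 0 l) y :=
  (contDiffOn_of_hasDerivAt_succ isOpen_Ioi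
    (fun m _ hx => hasDerivAt_latticeSum hl₀ hl hx m) n).contDiffAt (isOpen_Ioi.mem_nhds hy)

theorem iteratedDeriv_fBmSpec {H l : ℝ} (hH : 0 < H) (hl₀ : l ≠ 0) (hl : |l| ≤ 1) (k : ℕ) :
    iteratedDeriv k (fun y => fBmSpec y l) H = (1 - Real.cos l) *
      ∑ j ∈ Finset.range (k + 1), k.choose j * iteratedDeriv j CH H * latticeSum (k - j) l H := by
  have hfun : (fun y => fBmSpec y l) = fun y => (1 - Real.cos l) * (CH y * latticeSum 0 l y) := by
    ext y
    simp only [fBmSpec, latticeSum, latticeTerm, pow_zero, one_mul]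
    ring
  rw [hfun, iteratedDeriv_const_mul_field,
    iteratedDeriv_fun_mul (contDiffAt_CH hH) (contDiffAt_latticeSum hl₀ hl hH k)]
  simp only [iteratedDeriv_latticeSum hl₀ hl hH]

theorem tendsto_latticeSum_mul_rpow_div_pow {y : ℝ} (hy : 0 < y) (m : ℕ) :
    Tendsto (fun l => latticeSum m l y * |l| ^ (1 + 2 * y) / (2 * Real.log (1 / |l|)) ^ m)
      (𝓝[≠] 0) (𝓝 1) := by
  set M := (2 * (m + 1) / y) ^ m * ∑' k : ℤ, |(k : ℝ)| ^ (-1 - y)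
  rw [tendsto_iff_norm_sub_tendsto_zero]
  have hsmall := (tendsto_abs_rpow_nhdsNE_zero (s := 1 + 2 * y) (by linarith)).const_mul M
  rw [mul_zero] at hsmall
  refine squeeze_zero_norm' ?_ hsmall
  filter_upwards [eventually_ne_zero_and_abs_lt_one,
    tendsto_log_one_div_abs_nhdsNE_zero.eventually_ge_atTop (1 / 2)] with l ⟨hl₀, hl₁⟩ hL
  have hl : 0 < |l| := abs_pos.2 hl₀
  have hpow : 1 ≤ (2 * Real.log (1 / |l|)) ^ m := one_le_pow₀ (by linarith)
  have hmain : (-2 * Real.log |l|) ^ m * |l| ^ (-1 - 2 * y) * |l| ^ (1 + 2 * y) =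
      (2 * Real.log (1 / |l|)) ^ m := by
    rw [mul_assoc, ← Real.rpow_add hl, one_div, Real.log_inv]
    norm_num
  have hsplit : latticeSum m l y * |l| ^ (1 + 2 * y) / (2 * Real.log (1 / |l|)) ^ m - 1 =
      latticeTail m l y * |l| ^ (1 + 2 * y) / (2 * Real.log (1 / |l|)) ^ m := by
    rw [latticeSum_eq_add_latticeTail hl₁.le hy, add_mul, hmain]
    field_simp
    ring
  rw [norm_norm, hsplit, norm_div, norm_mul, Real.norm_of_nonneg (Real.rpow_nonneg hl.le _),
    Real.norm_of_nonneg (hpow.trans' zero_le_one)]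
  calc ‖latticeTail m l y‖ * |l| ^ (1 + 2 * y) / (2 * Real.log (1 / |l|)) ^ m
      ≤ ‖latticeTail m l y‖ * |l| ^ (1 + 2 * y) := div_le_self (by positivity) hpow
    _ ≤ M * |l| ^ (1 + 2 * y) := by
        gcongr
        exact abs_latticeTail_le hl₁.le hy m

theorem tendsto_iteratedDeriv_div {H : ℝ} (hH : H ∈ Ioo (0 : ℝ) 1) (k : ℕ) :
    Tendsto (fun l : ℝ => iteratedDeriv k (fun H' => fBmSpec H' l) H /
        ((2 : ℝ) ^ ((k : ℝ) - 1) * CH H * |l| ^ (1 - 2 * H) * (Real.log (1 / |l|)) ^ k))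
      (𝓝[≠] 0) (𝓝 1) := by
  set c : ℕ → ℝ := fun j => k.choose j * iteratedDeriv j CH H / CH H
  have hCH : CH H ≠ 0 := (CH_pos hH).ne'
  have hinv : Tendsto (fun l : ℝ => (2 * Real.log (1 / |l|))⁻¹) (𝓝[≠] 0) (𝓝 0) :=
    (tendsto_log_one_div_abs_nhdsNE_zero.const_mul_atTop two_pos).inv_tendsto_atTop
  have hlim := tendsto_two_mul_one_sub_cos_div_sq.mul <| tendsto_finsetSum (Finset.range (k + 1))
    fun j _ => ((hinv.pow j).const_mul (c j)).mul (tendsto_latticeSum_mul_rpow_div_pow hH.1 (k - j))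
  have hval : 1 * ∑ j ∈ Finset.range (k + 1), c j * 0 ^ j * 1 = 1 := by
    simp [Finset.sum_range_succ', c, hCH]
  rw [hval] at hlim
  refine hlim.congr' ?_
  filter_upwards [eventually_ne_zero_and_abs_lt_one,
    tendsto_log_one_div_abs_nhdsNE_zero.eventually_gt_atTop 0] with l ⟨hl₀, hl₁⟩ hL
  have hl : 0 < |l| := abs_pos.2 hl₀
  have hsq : l ^ 2 = |l| ^ (1 + 2 * H) * |l| ^ (1 - 2 * H) := by
    rw [← Real.rpow_add hl, show 1 + 2 * H + (1 - 2 * H) = ((2 : ℕ) : ℝ) by norm_num,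
      Real.rpow_natCast, sq_abs]
  rw [iteratedDeriv_fBmSpec hH.1 hl₀ hl₁.le, Finset.mul_sum, Finset.mul_sum, Finset.sum_div, hsq]
  generalize Real.log (1 / |l|) = L at hL ⊢
  refine Finset.sum_congr rfl fun j hj => ?_
  have hjk : j + (k - j) = k := Nat.add_sub_cancel' (Nat.lt_succ_iff.mp (Finset.mem_range.mp hj))
  have hden : (2 : ℝ) ^ ((k : ℝ) - 1) * CH H * |l| ^ (1 - 2 * H) * L ^ k =
      CH H / 2 * |l| ^ (1 - 2 * H) * ((2 * L) ^ j * (2 * L) ^ (k - j)) := by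
    rw [← pow_add, hjk, mul_pow, Real.rpow_sub two_pos, Real.rpow_one, Real.rpow_natCast]
    ring
  rw [hden]
  have hL₀ := hL.ne'
  simp only [c, inv_pow]
  field_simp

end fBmSpec

/-- **Small-frequency asymptotics of the fBm increment spectral density.** For all
`H ∈ (0,1)` and `k ≥ 0`,
`∂_H^k f_H(λ) / (2^{k-1} C_H |λ|^{1-2H} (log(1/|λ|))^k) → 1` as `λ → 0`; in particular
`f_H(λ) ~ (C_H/2)|λ|^{1-2H}` and `∂_H f_H(λ) ~ C_H |λ|^{1-2H} log(1/|λ|)`. -/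
theorem fBm_spectral_density_asymptotics (H : ℝ) (hH : H ∈ Set.Ioo (0 : ℝ) 1) :
    (∀ k : ℕ,
      Tendsto (fun l : ℝ =>
          iteratedDeriv k (fun H' => fBmSpec H' l) H /
            ((2 : ℝ) ^ ((k : ℝ) - 1) * CH H * |l| ^ (1 - 2 * H) *
              (Real.log (1 / |l|)) ^ k))
        (nhdsWithin 0 {0}ᶜ) (𝓝 1)) ∧
    Tendsto (fun l : ℝ => fBmSpec H l / ((CH H / 2) * |l| ^ (1 - 2 * H)))
      (nhdsWithin 0 {0}ᶜ) (𝓝 1) ∧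
    Tendsto (fun l : ℝ =>
        deriv (fun H' => fBmSpec H' l) H /
          (CH H * |l| ^ (1 - 2 * H) * Real.log (1 / |l|)))
      (nhdsWithin 0 {0}ᶜ) (𝓝 1) := by
  have h := fBmSpec.tendsto_iteratedDeriv_div hH
  refine ⟨h, (h 0).congr fun l => ?_, (h 1).congr fun l => ?_⟩
  · norm_num [Real.rpow_neg_one, div_eq_inv_mul]
  · simp

end
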